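/- arXiv:2305.08334 — 3 statements merged into one kernel-verified Lean document; each statement's English description precedes it below -/
import Mathlib

section
/- Let H₁ and H₂ be Hermitian n×n complex matrices with [H₁, H₂] = 0, set H = H₁ + H₂, and let A, B be any n×n complex matrices. Then for all t ∈ ℝ: ‖ [ exp(i t H) A exp(−i t H), B ] ‖ ≤ ‖[A, B]‖ + 2|t| · ( ‖[H₂, A]‖ · ‖B‖ + ‖[H₁, B]‖ · ‖A‖ ). In particular, if [A, B] = 0, then the commutator of the Heisenberg-evolved operator exp(itH)·A·exp(−itH) with B grows at most linearly in |t|, with a prefactor controlled by the commutators ‖[H₂, A]‖ and ‖[H₁, B]‖. -/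
open Matrix
open scoped Matrix.Norms.L2Operator

/-!
Since `H₁` and `H₂` commute, `exp (itH) = U₁ U₂` with `Uⱼ = exp (itHⱼ)` unitary, and conjugating
by `U₁` turns the commutator into `⁅U₂ A U₂⋆, U₁⋆ B U₁⁆` without changing its norm. Each of the
two entries moves away from `A`, resp. `B`, by at most `|t|‖⁅H₂, A⁆‖`, resp. `|t|‖⁅H₁, B⁆‖`:
along `s ↦ exp (s X) a exp (-s X)` the derivative is a unitary conjugate of `⁅X, a⁆`. Bilinearity
of the commutator converts these perturbations into the stated bound.
-/

open NormedSpace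

section NormedRing

variable {R : Type*} [NormedRing R]

theorem norm_lie_le (x y : R) : ‖⁅x, y⁆‖ ≤ 2 * ‖x‖ * ‖y‖ :=
  calc ‖⁅x, y⁆‖ ≤ ‖x * y‖ + ‖y * x‖ := by rw [Ring.lie_def]; exact norm_sub_le _ _
    _ ≤ ‖x‖ * ‖y‖ + ‖y‖ * ‖x‖ := add_le_add (norm_mul_le x y) (norm_mul_le y x)
    _ = 2 * ‖x‖ * ‖y‖ := by ring

theorem norm_lie_le_norm_lie_add (a b a' b' : R) :
    ‖⁅a', b'⁆‖ ≤ ‖⁅a, b⁆‖ + 2 * ‖a' - a‖ * ‖b'‖ + 2 * ‖b' - b‖ * ‖a‖ := by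
  have h : ⁅a', b'⁆ = ⁅a, b⁆ + ⁅a' - a, b'⁆ + ⁅a, b' - b⁆ := by
    simp only [Ring.lie_def]; noncomm_ring
  calc ‖⁅a', b'⁆‖ ≤ ‖⁅a, b⁆‖ + ‖⁅a' - a, b'⁆‖ + ‖⁅a, b' - b⁆‖ := h ▸ norm_add₃_le
    _ ≤ ‖⁅a, b⁆‖ + 2 * ‖a' - a‖ * ‖b'‖ + 2 * ‖b' - b‖ * ‖a‖ := by
      gcongr
      · exact norm_lie_le _ _
      · exact (norm_lie_le _ _).trans_eq (by ring)

theorem norm_lie_smul_left {𝕜 : Type*} [NormedField 𝕜] [NormedAlgebra 𝕜 R] (c : 𝕜) (x a : R) :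
    ‖⁅c • x, a⁆‖ = ‖c‖ * ‖⁅x, a⁆‖ := by
  rw [Ring.lie_def, Ring.lie_def, smul_mul_assoc, mul_smul_comm, ← smul_sub, norm_smul]

end NormedRing

section CStarAlgebra

variable {E : Type*} [CStarAlgebra E]

theorem norm_mul_mul_star_of_mem_unitary {U : E} (hU : U ∈ unitary E) (a : E) :
    ‖U * a * star U‖ = ‖a‖ := by
  rw [CStarRing.norm_mul_mem_unitary _ (Unitary.star_mem hU), CStarRing.norm_mem_unitary_mul _ hU]

theorem norm_star_mul_mul_of_mem_unitary {U : E} (hU : U ∈ unitary E) (a : E) :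
    ‖star U * a * U‖ = ‖a‖ := by
  simpa using norm_mul_mul_star_of_mem_unitary (Unitary.star_mem hU) a

theorem norm_lie_mul_mul_star_of_mem_unitary {U : E} (hU : U ∈ unitary E) (a b : E) :
    ‖⁅U * a * star U, b⁆‖ = ‖⁅a, star U * b * U⁆‖ := by
  have h : ⁅U * a * star U, b⁆ = U * ⁅a, star U * b * U⁆ * star U := by
    simp only [Ring.lie_def, mul_sub, sub_mul, mul_assoc, Unitary.mul_star_self_of_mem hU, mul_one]
    simp only [← mul_assoc, Unitary.mul_star_self_of_mem hU, one_mul]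
  rw [h, norm_mul_mul_star_of_mem_unitary hU]

/-- `NormedSpace.exp_mem_unitary_of_mem_skewAdjoint` asks for a `NormedAlgebra ℚ` instance, which
is not available for C⋆-algebras (nor for matrices with the L² operator norm). -/
theorem CStarAlgebra.exp_mem_unitary_of_mem_skewAdjoint {x : E} (hx : x ∈ skewAdjoint E) :
    exp x ∈ unitary E :=
  let _ : NormedAlgebra ℚ E := NormedAlgebra.restrictScalars ℚ ℂ E
  NormedSpace.exp_mem_unitary_of_mem_skewAdjoint hx

theorem star_exp_of_mem_skewAdjoint {x : E} (hx : x ∈ skewAdjoint E) :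
    star (exp x) = exp (-x) := by
  rw [star_exp, skewAdjoint.mem_iff.mp hx]

theorem norm_exp_mul_mul_star_sub_le {x : E} (hx : x ∈ skewAdjoint E) (a : E) :
    ‖exp x * a * star (exp x) - a‖ ≤ ‖⁅x, a⁆‖ := by
  let f : ℝ → E := fun s => exp (s • x) * a * exp (s • -x)
  have hsx : ∀ s : ℝ, s • x ∈ skewAdjoint E := fun s => skewAdjoint.smul_mem s hx
  have hf : ∀ s : ℝ, HasDerivAt f (exp (s • x) * ⁅x, a⁆ * exp (s • -x)) s := by
    intro s
    refine (((hasDerivAt_exp_smul_const (𝕂 := ℝ) x s).mul_const a).mul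
      (hasDerivAt_exp_smul_const' (𝕂 := ℝ) (-x) s)).congr_deriv ?_
    simp only [Ring.lie_def]; noncomm_ring
  have hf' : ∀ s : ℝ, ‖exp (s • x) * ⁅x, a⁆ * exp (s • -x)‖ ≤ ‖⁅x, a⁆‖ := by
    intro s
    rw [smul_neg, ← star_exp_of_mem_skewAdjoint (hsx s), norm_mul_mul_star_of_mem_unitary
      (CStarAlgebra.exp_mem_unitary_of_mem_skewAdjoint (hsx s))]
  have h := norm_image_sub_le_of_norm_deriv_le_segment_01' (f := f)
    (fun s _ => (hf s).hasDerivWithinAt) (fun s _ => hf' s)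
  simpa [f, star_exp_of_mem_skewAdjoint hx] using h

theorem norm_star_exp_mul_mul_exp_sub_le {x : E} (hx : x ∈ skewAdjoint E) (a : E) :
    ‖star (exp x) * a * exp x - a‖ ≤ ‖⁅x, a⁆‖ := by
  have h_lie : ‖⁅-x, a⁆‖ = ‖⁅x, a⁆‖ := by
    rw [Ring.lie_def, Ring.lie_def, neg_mul, mul_neg, ← norm_neg]; congr 1; abel
  simpa [star_exp_of_mem_skewAdjoint hx, star_exp_of_mem_skewAdjoint (neg_mem hx), h_lie] using
    norm_exp_mul_mul_star_sub_le (neg_mem hx) a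

end CStarAlgebra

/-- **Linear-in-time commutator growth from almost-commuting generators.**
Let `H₁, H₂` be commuting Hermitian matrices and `H = H₁ + H₂`.  Then for any matrices
`A, B` and all `t ∈ ℝ`, the commutator of the Heisenberg-evolved `exp(itH) A exp(−itH)`
with `B` is bounded (in `ℓ² → ℓ²` operator norm) by
`‖[A,B]‖ + 2|t|(‖[H₂,A]‖‖B‖ + ‖[H₁,B]‖‖A‖)`. -/
theorem norm_commutator_heisenberg_le (n : ℕ)
    (H₁ H₂ : Matrix (Fin n) (Fin n) ℂ)
    (hH₁ : H₁.IsHermitian) (hH₂ : H₂.IsHermitian)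
    (hcomm : H₁ * H₂ - H₂ * H₁ = 0)
    (H : Matrix (Fin n) (Fin n) ℂ) (hH : H = H₁ + H₂)
    (A B : Matrix (Fin n) (Fin n) ℂ) :
    ∀ t : ℝ,
      ‖(NormedSpace.exp ((Complex.I * (t : ℂ)) • H) * A *
            NormedSpace.exp ((-(Complex.I * (t : ℂ))) • H)) * B -
        B * (NormedSpace.exp ((Complex.I * (t : ℂ)) • H) * A *
            NormedSpace.exp ((-(Complex.I * (t : ℂ))) • H))‖
      ≤ ‖A * B - B * A‖ +
        2 * |t| * (‖H₂ * A - A * H₂‖ * ‖B‖ + ‖H₁ * B - B * H₁‖ * ‖A‖) := by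
  intro t
  subst hH
  set c : ℂ := Complex.I * t
  have hc : c ∈ skewAdjoint ℂ := by simp [skewAdjoint.mem_iff, c]
  have hc_norm : ‖c‖ = |t| := by simp [c]
  have hX₁ : c • H₁ ∈ skewAdjoint _ := IsSelfAdjoint.smul_mem_skewAdjoint hc hH₁
  have hX₂ : c • H₂ ∈ skewAdjoint _ := IsSelfAdjoint.smul_mem_skewAdjoint hc hH₂
  set U₁ := exp (c • H₁)
  set U₂ := exp (c • H₂)
  have hU₁ : U₁ ∈ unitary _ := CStarAlgebra.exp_mem_unitary_of_mem_skewAdjoint hX₁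
  have hH₁₂ : Commute H₁ H₂ := sub_eq_zero.mp hcomm
  have hexp : exp (c • (H₁ + H₂)) = U₁ * U₂ := by
    rw [smul_add, Matrix.exp_add_of_commute _ _ ((hH₁₂.smul_left c).smul_right c)]
  have hexp_neg : exp (-c • (H₁ + H₂)) = star U₂ * star U₁ := by
    rw [neg_smul, ← star_exp_of_mem_skewAdjoint (smul_add c H₁ H₂ ▸ add_mem hX₁ hX₂), hexp,
      star_mul]
  have hA : ‖U₂ * A * star U₂ - A‖ ≤ |t| * ‖⁅H₂, A⁆‖ :=
    (norm_exp_mul_mul_star_sub_le hX₂ A).trans_eq (by rw [norm_lie_smul_left, hc_norm])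
  have hB : ‖star U₁ * B * U₁ - B‖ ≤ |t| * ‖⁅H₁, B⁆‖ :=
    (norm_star_exp_mul_mul_exp_sub_le hX₁ B).trans_eq (by rw [norm_lie_smul_left, hc_norm])
  rw [hexp, hexp_neg, show U₁ * U₂ * A * (star U₂ * star U₁) = U₁ * (U₂ * A * star U₂) * star U₁ by
    simp only [mul_assoc], ← Ring.lie_def, norm_lie_mul_mul_star_of_mem_unitary hU₁]
  calc _ ≤ ‖⁅A, B⁆‖ + 2 * ‖U₂ * A * star U₂ - A‖ * ‖star U₁ * B * U₁‖
        + 2 * ‖star U₁ * B * U₁ - B‖ * ‖A‖ := norm_lie_le_norm_lie_add _ _ _ _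
    _ ≤ ‖⁅A, B⁆‖ + 2 * (|t| * ‖⁅H₂, A⁆‖) * ‖B‖ + 2 * (|t| * ‖⁅H₁, B⁆‖) * ‖A‖ := by
      rw [norm_star_mul_mul_of_mem_unitary hU₁]; gcongr
    _ = _ := by simp only [Ring.lie_def]; ring
end

section
/- Let ξ > 0 be a real number and let r be a natural number with ξ ≤ r. Then Σ_{k=r}^{∞} (k+1) · e^{−(k+1)/ξ} ≤ (ξ·r + ξ²) · e^{−r/ξ}, where the left-hand side is the (convergent) infinite series over integers k ≥ r. -/
/-- **Tail estimate** (Step 1 of the proof of Theorem 1): for `ξ > 0` and a natural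
number `r` with `ξ ≤ r`, the series `Σ_{k=r}^∞ (k+1)·e^{−(k+1)/ξ}` is bounded by
`(ξ·r + ξ²)·e^{−r/ξ}`. -/
theorem tsum_tail_le (ξ : ℝ) (hξ : 0 < ξ) (r : ℕ) (hr : ξ ≤ r) :
    (∑' k : ℕ, ((r + k : ℝ) + 1) * Real.exp (-((r + k : ℝ) + 1) / ξ))
      ≤ (ξ * r + ξ ^ 2) * Real.exp (-(r : ℝ) / ξ) := by
  set x : ℝ := Real.exp (-(1 / ξ)) with hxdef
  have hx0 : 0 < x := Real.exp_pos _
  have hx1 : x < 1 := Real.exp_lt_one_iff.mpr (neg_lt_zero.mpr (by positivity))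
  have h1x : 0 < 1 - x := by linarith
  have hxn : ∀ n : ℕ, Real.exp (-(n : ℝ) / ξ) = x ^ n := by
    intro n
    rw [show (-(n : ℝ) / ξ) = (n : ℝ) * (-(1 / ξ)) by ring, Real.exp_nat_mul]
  -- rewrite each term
  have hterm : ∀ k : ℕ,
      ((r + k : ℝ) + 1) * Real.exp (-((r + k : ℝ) + 1) / ξ)
        = x ^ (r + 1) * (((r : ℝ) + 1) * x ^ k + (k : ℝ) * x ^ k) := by
    intro k
    have h1 : (-((r + k : ℝ) + 1) / ξ) = -((r + k + 1 : ℕ) : ℝ) / ξ := by push_cast; ring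
    rw [h1, hxn (r + k + 1), show r + k + 1 = (r + 1) + k by ring, pow_add]
    push_cast
    ring
  have hnorm : ‖x‖ < 1 := by rwa [Real.norm_eq_abs, abs_of_pos hx0]
  have hs1 : Summable (fun k : ℕ => ((r : ℝ) + 1) * x ^ k) :=
    (summable_geometric_of_lt_one hx0.le hx1).mul_left _
  have hs2 : Summable (fun k : ℕ => (k : ℝ) * x ^ k) :=
    (hasSum_coe_mul_geometric_of_norm_lt_one hnorm).summable
  have hsum : (∑' k : ℕ, ((r + k : ℝ) + 1) * Real.exp (-((r + k : ℝ) + 1) / ξ))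
      = x ^ (r + 1) * (((r : ℝ) + 1) * (1 - x)⁻¹ + x / (1 - x) ^ 2) := by
    rw [tsum_congr hterm, tsum_mul_left, Summable.tsum_add hs1 hs2, tsum_mul_left,
      tsum_geometric_of_lt_one hx0.le hx1, tsum_coe_mul_geometric_of_norm_lt_one hnorm]
  rw [hsum, hxn r]
  -- key inequalities
  have hxE : x * Real.exp (1 / ξ) = 1 := by
    rw [← Real.exp_add]; simp
  have hA : x ≤ ξ * (1 - x) := by
    have h := Real.add_one_le_exp (1 / ξ)
    have h2 : x * (1 / ξ + 1) ≤ 1 := by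
      calc x * (1 / ξ + 1) ≤ x * Real.exp (1 / ξ) :=
            mul_le_mul_of_nonneg_left h hx0.le
        _ = 1 := hxE
    rw [mul_add, mul_one, mul_one_div] at h2
    have h2' : x / ξ ≤ 1 - x := by linarith
    rw [mul_comm]
    exact (div_le_iff₀ hξ).mp h2'
  have hB : x ≤ ξ ^ 2 * (1 - x) ^ 2 := by
    set u : ℝ := Real.exp (-(1 / (2 * ξ))) with hudef
    have hu0 : 0 < u := Real.exp_pos _
    have hu2 : u ^ 2 = x := by
      rw [sq, ← Real.exp_add, hxdef]
      congr 1
      field_simp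
      ring
    set v : ℝ := Real.exp (1 / (2 * ξ)) with hvdef
    have huv : u * v = 1 := by rw [← Real.exp_add]; simp
    have hsinh := Real.self_lt_sinh_iff.mpr (show (0:ℝ) < 1 / (2 * ξ) by positivity)
    rw [Real.sinh_eq, ← hvdef, ← hudef] at hsinh
    have hhalf : (1:ℝ) / (2 * ξ) = (1 / ξ) / 2 := by ring
    rw [hhalf] at hsinh
    have h3 : u * ((1 / ξ) / 2) ≤ u * ((v - u) / 2) :=
      mul_le_mul_of_nonneg_left hsinh.le hu0.le
    have h4 : u * (1 / ξ) ≤ 1 - x := by nlinarith [h3, huv, hu2]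
    have h4' : u / ξ ≤ 1 - x := by rw [div_eq_mul_inv, ← one_div]; exact h4
    have h5 : u ≤ ξ * (1 - x) := by
      rw [mul_comm]; exact (div_le_iff₀ hξ).mp h4'
    calc x = u ^ 2 := hu2.symm
      _ ≤ (ξ * (1 - x)) ^ 2 := by
          apply pow_le_pow_left₀ hu0.le h5
      _ = ξ ^ 2 * (1 - x) ^ 2 := by ring
  -- reduce to the per-power inequality
  have hxr : (0:ℝ) ≤ x ^ r := by positivity
  have key : x * (((r : ℝ) + 1) * (1 - x)⁻¹ + x / (1 - x) ^ 2) ≤ ξ * r + ξ ^ 2 := by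
    have e : x * (((r : ℝ) + 1) * (1 - x)⁻¹ + x / (1 - x) ^ 2)
        = (x * ((r : ℝ) + 1) * (1 - x) + x ^ 2) / (1 - x) ^ 2 := by
      field_simp
    rw [e, div_le_iff₀ (by positivity)]
    have hrA : (r : ℝ) * (x * (1 - x)) ≤ (r : ℝ) * (ξ * (1 - x) * (1 - x)) := by
      apply mul_le_mul_of_nonneg_left _ (Nat.cast_nonneg r)
      exact mul_le_mul_of_nonneg_right hA h1x.le
    nlinarith [hrA, hB]
  calc x ^ (r + 1) * (((r : ℝ) + 1) * (1 - x)⁻¹ + x / (1 - x) ^ 2)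
      = x ^ r * (x * (((r : ℝ) + 1) * (1 - x)⁻¹ + x / (1 - x) ^ 2)) := by
        rw [pow_succ]; ring
    _ ≤ x ^ r * (ξ * r + ξ ^ 2) := mul_le_mul_of_nonneg_left key hxr
    _ = (ξ * r + ξ ^ 2) * x ^ r := mul_comm _ _
end

section
/- Let P, ξ, α, C₁, t be positive real numbers satisfying C₁·P·ξ·t^{α+1} ≥ 2(α+1). Then there exists a real number r ≥ 0 (namely r = ξ·ln( C₁·P·ξ·t^{α+1} / (2(α+1)) )) such that 2·P·r + (C₁·P²·t^{α+1}/(α+1))·(ξ·r + ξ²)·e^{−r/ξ} ≤ 4·P·ξ·[ (α+1)·ln t + ln(P·ξ) + ln( C₁·√e / (2(α+1)) ) ]. -/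
/-!
At `r = ξ · log A`, with `A = C₁Pξt^{α+1}/(2(α+1)) ≥ 1`, the damping factor `e^{-r/ξ}` is `A⁻¹`
and the prefactor `C₁P²t^{α+1}/(α+1)` is `2PA/ξ`, so the second term collapses to `2P(r + ξ)`.
The bound is then exactly `4Pξ (log A + 1/2) = 4Pξ log (A √e)`, and expanding the logarithm of
`A √e = t^{α+1} · Pξ · C₁√e/(2(α+1))` gives the stated right-hand side.
-/

open Real

lemma exp_neg_mul_log_div {ξ A : ℝ} (hξ : ξ ≠ 0) (hA : 0 < A) :
    exp (-(ξ * log A) / ξ) = A⁻¹ := by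
  rw [neg_div, mul_div_cancel_left₀ _ hξ, exp_neg, exp_log hA]

lemma mul_log_add_mul_exp_neg_eq_log_mul_sqrt_exp {P ξ A : ℝ} (hξ : ξ ≠ 0) (hA : 0 < A) :
    2 * P * (ξ * log A) + 2 * P * A / ξ * (ξ * (ξ * log A) + ξ ^ 2) * exp (-(ξ * log A) / ξ)
      = 4 * P * ξ * log (A * √(exp 1)) := by
  rw [exp_neg_mul_log_div hξ hA, log_mul hA.ne' (sqrt_pos.2 (exp_pos 1)).ne',
    log_sqrt (exp_pos 1).le, log_exp]
  field_simp
  ring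

/-- **Final optimization step in the proof of Theorem 1**: substituting the leading term
`r = ξ·ln(C₁·P·ξ·t^{α+1}/(2(α+1)))` of the Lambert `W₋₁` branch into the bound
`2Pr + (C₁P²t^{α+1}/(α+1))(ξr + ξ²)e^{−r/ξ}` yields the logarithmic-in-time entanglement
growth bound `4Pξ[(α+1)·ln t + ln(Pξ) + ln(C₁√e/(2(α+1)))]`. -/
theorem entanglement_bound_optimization (P ξ α C₁ t : ℝ)
    (hP : 0 < P) (hξ : 0 < ξ) (hα : 0 < α) (hC₁ : 0 < C₁) (ht : 0 < t)
    (hbig : 2 * (α + 1) ≤ C₁ * P * ξ * t ^ (α + 1)) :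
    ∃ r : ℝ, r = ξ * Real.log (C₁ * P * ξ * t ^ (α + 1) / (2 * (α + 1))) ∧ 0 ≤ r ∧
      2 * P * r + C₁ * P ^ 2 * t ^ (α + 1) / (α + 1) * (ξ * r + ξ ^ 2) * Real.exp (-r / ξ)
        ≤ 4 * P * ξ *
          ((α + 1) * Real.log t + Real.log (P * ξ) +
            Real.log (C₁ * Real.sqrt (Real.exp 1) / (2 * (α + 1)))) := by
  have hα₁ : 0 < α + 1 := by linarith
  set A := C₁ * P * ξ * t ^ (α + 1) / (2 * (α + 1)) with hA_def
  have hA₁ : 1 ≤ A := (one_le_div (by positivity)).2 hbig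
  refine ⟨ξ * log A, rfl, mul_nonneg hξ.le (log_nonneg hA₁), le_of_eq ?_⟩
  have hcoeff : C₁ * P ^ 2 * t ^ (α + 1) / (α + 1) = 2 * P * A / ξ := by
    rw [hA_def]
    field_simp
  have hsplit : A * √(exp 1) = t ^ (α + 1) * (P * ξ) * (C₁ * √(exp 1) / (2 * (α + 1))) := by
    rw [hA_def]
    ring
  rw [hcoeff, mul_log_add_mul_exp_neg_eq_log_mul_sqrt_exp hξ.ne' (one_pos.trans_le hA₁), hsplit,
    log_mul (by positivity) (by positivity), log_mul (by positivity) (by positivity),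
    log_rpow ht]
end
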